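/- arXiv:math/0502021 — 3 statements merged into one kernel-verified Lean document; each statement's English description precedes it below -/
import Mathlib

section
/- Let X be a normed space. X is uniformly convex if and only if for every ε > 0 there exists δ > 0 such that for every bounded linear functional φ on X with ‖φ‖ = 1 and all x, y in the δ-slice S_{φ,δ} = {x : ‖x‖ ≤ 1 and Re φ(x) > 1 − δ}, one has ‖x − y‖ < ε. -/
/-- Uniform convexity is equivalent to the "thin slices of the unit ball are small"
condition. -/
theorem uniformConvex_iff_thin_slices {X : Type*} [NormedAddCommGroup X] [NormedSpace ℝ X] :
    (∀ ε > (0 : ℝ), ∃ δ > (0 : ℝ), ∀ x y : X, ‖x‖ ≤ 1 → ‖y‖ ≤ 1 →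
        2 - δ < ‖x + y‖ → ‖x - y‖ < ε) ↔
    (∀ ε > (0 : ℝ), ∃ δ > (0 : ℝ), ∀ φ : X →L[ℝ] ℝ, ‖φ‖ = 1 →
        ∀ x y : X, ‖x‖ ≤ 1 → 1 - δ < φ x → ‖y‖ ≤ 1 → 1 - δ < φ y → ‖x - y‖ < ε) := by
  constructor
  · intro h ε hε
    obtain ⟨δ, hδ, H⟩ := h ε hε
    refine ⟨δ / 2, by linarith, ?_⟩
    intro φ hφ x y hx hφx hy hφy
    apply H x y hx hy
    have h1 : φ (x + y) ≤ ‖x + y‖ := by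
      calc φ (x + y) ≤ ‖φ (x + y)‖ := le_abs_self _
        _ ≤ ‖φ‖ * ‖x + y‖ := φ.le_opNorm _
        _ = ‖x + y‖ := by rw [hφ, one_mul]
    have := φ.map_add x y
    linarith
  · intro h ε hε
    obtain ⟨δ, hδ, H⟩ := h ε hε
    refine ⟨min δ 1, lt_min hδ one_pos, ?_⟩
    intro x y hx hy hxy
    have hmin1 : min δ 1 ≤ 1 := min_le_right _ _
    have hminδ : min δ 1 ≤ δ := min_le_left _ _
    have hne : x + y ≠ 0 := by
      intro h0
      rw [h0, norm_zero] at hxy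
      linarith
    obtain ⟨φ, hφ, hφxy⟩ := exists_dual_vector ℝ (x + y) (norm_ne_zero_iff.mpr hne)
    have hφx : φ x ≤ 1 := by
      calc φ x ≤ ‖φ x‖ := le_abs_self _
        _ ≤ ‖φ‖ * ‖x‖ := φ.le_opNorm _
        _ ≤ 1 := by rw [hφ, one_mul]; exact hx
    have hφy : φ y ≤ 1 := by
      calc φ y ≤ ‖φ y‖ := le_abs_self _
        _ ≤ ‖φ‖ * ‖y‖ := φ.le_opNorm _
        _ ≤ 1 := by rw [hφ, one_mul]; exact hy
    have hsum : φ x + φ y = ‖x + y‖ := by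
      rw [← φ.map_add]; exact_mod_cast hφxy
    exact H φ hφ x y hx (by linarith) hy (by linarith)
end

section
/- Let 1 < p < ∞ and f(u) = |u|^p − 1 + p(1 − Re u). Then |u − 1|^p / f(u) → 1 as |u| → ∞; consequently, for every ε > 0 there exists α > 1 such that |u − 1|^p ≤ α f(u) whenever |u − 1| ≥ ε. -/
/-!
Along `cobounded ℂ` both `‖u - 1‖ ^ p` and `f u` are asymptotically equivalent to `‖u‖ ^ p`: the
first because `‖u - 1‖ ~ ‖u‖`, the second because `f u - ‖u‖ ^ p = (p - 1) - p * re u = O(‖u‖)` and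
`‖u‖ = o(‖u‖ ^ p)` for `p > 1`. So the ratio `‖u - 1‖ ^ p / f u` tends to `1` and is at most `2`
outside a compact set. By Bernoulli's inequality `f > 0` away from `u = 1`, so the ratio is
continuous on the closed set `{u | ε ≤ ‖u - 1‖}`, hence bounded on its compact part as well.
-/

open Filter Topology Asymptotics Bornology

noncomputable def youngFun (p : ℝ) (u : ℂ) : ℝ := ‖u‖ ^ p - 1 + p * (1 - u.re)

theorem youngFun_pos {p : ℝ} (hp : 1 < p) {u : ℂ} (hu : u ≠ 1) : 0 < youngFun p u := by
  have hre : u.re ≤ ‖u‖ := Complex.re_le_norm u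
  rcases eq_or_ne ‖u‖ 1 with hnorm | hnorm
  · have hre_lt : u.re < 1 := by
      refine lt_of_le_of_ne (hnorm ▸ hre) fun hre_eq => hu ?_
      have him : u.im = 0 := Complex.abs_re_eq_norm.mp (by rw [hre_eq, hnorm, abs_one])
      exact Complex.ext hre_eq him
    rw [youngFun, hnorm, Real.one_rpow]
    nlinarith
  · have bernoulli : 1 + p * (‖u‖ - 1) < ‖u‖ ^ p := by
      simpa using one_add_mul_self_lt_rpow_one_add (by linarith [norm_nonneg u])
        (sub_ne_zero.mpr hnorm) hp
    rw [youngFun]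
    nlinarith

theorem continuous_youngFun {p : ℝ} (hp : 0 ≤ p) : Continuous (youngFun p) := by
  unfold youngFun
  fun_prop (disch := assumption)

theorem isLittleO_const_norm_cobounded {E F : Type*} [SeminormedAddCommGroup E]
    [NormedAddCommGroup F] (c : F) : (fun _ => c) =o[cobounded E] norm :=
  isLittleO_const_left.mpr (Or.inr (tendsto_norm_atTop_atTop.comp tendsto_norm_cobounded_atTop))

theorem isEquivalent_norm_sub_const_cobounded {E : Type*} [SeminormedAddCommGroup E] (a : E) :
    (fun u => ‖u - a‖) ~[cobounded E] norm := by
  have hdiff : (fun u => ‖u - a‖ - ‖u‖) =O[cobounded E] fun _ => ‖a‖ :=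
    IsBigO.of_bound' (Eventually.of_forall fun u => by
      simpa [abs_sub_comm] using abs_norm_sub_norm_le (u - a) u)
  exact hdiff.trans_isLittleO (isLittleO_const_norm_cobounded ‖a‖)

theorem isLittleO_id_rpow_atTop {p : ℝ} (hp : 1 < p) : (fun x : ℝ => x) =o[atTop] (· ^ p) := by
  have h : (fun _ : ℝ => (1 : ℝ)) =o[atTop] (· ^ (p - 1)) :=
    isLittleO_const_left.mpr <|
      Or.inr (tendsto_norm_atTop_atTop.comp (tendsto_rpow_atTop (by linarith)))
  refine ((isBigO_refl (fun x : ℝ => x) atTop).mul_isLittleO h).congr' (by simp) ?_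
  filter_upwards [eventually_gt_atTop 0] with x hx
  rw [← Real.rpow_one_add' hx.le (by linarith), add_sub_cancel]

theorem youngFun_isEquivalent_cobounded {p : ℝ} (hp : 1 < p) :
    youngFun p ~[cobounded ℂ] fun u => ‖u‖ ^ p := by
  have hre : Complex.re =O[cobounded ℂ] norm :=
    IsBigO.of_bound 1 (Eventually.of_forall fun u => by simpa using Complex.abs_re_le_norm u)
  have hdiff : (fun u => youngFun p u - ‖u‖ ^ p) =O[cobounded ℂ] norm :=
    ((isLittleO_const_norm_cobounded (p - 1)).isBigO.sub (hre.const_mul_left p)).congr_left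
      fun u => by rw [youngFun]; ring
  exact hdiff.trans_isLittleO
    ((isLittleO_id_rpow_atTop hp).comp_tendsto tendsto_norm_cobounded_atTop)

theorem tendsto_rpow_norm_sub_one_div_youngFun {p : ℝ} (hp : 1 < p) :
    Tendsto (fun u => ‖u - 1‖ ^ p / youngFun p u) (cobounded ℂ) (𝓝 1) := by
  have hequiv : (fun u : ℂ => ‖u - 1‖ ^ p) ~[cobounded ℂ] youngFun p :=
    ((isEquivalent_norm_sub_const_cobounded (1 : ℂ)).rpow (fun _ => norm_nonneg _)).trans
      (youngFun_isEquivalent_cobounded hp).symm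
  have hne : ∀ᶠ u in cobounded ℂ, youngFun p u ≠ 0 := by
    filter_upwards [isBounded_singleton (x := (1 : ℂ))] with u hu
    exact (youngFun_pos hp hu).ne'
  exact (isEquivalent_iff_tendsto_one hne).mp hequiv

theorem ContinuousOn.bddAbove_image_of_eventually_le_cocompact {X β : Type*} [TopologicalSpace X]
    [LinearOrder β] [TopologicalSpace β] [ClosedIciTopology β] {f : X → β} {s : Set X} {C : β}
    (hs : IsClosed s) (hf : ContinuousOn f s) (hC : ∀ᶠ x in cocompact X, f x ≤ C) :
    BddAbove (f '' s) := by
  have : Nonempty β := ⟨C⟩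
  obtain ⟨K, hK, hKC⟩ := mem_cocompact.mp hC
  obtain ⟨D, hD⟩ := ((hK.inter_right hs).bddAbove_image (hf.mono Set.inter_subset_right))
  refine ⟨max C D, Set.forall_mem_image.mpr fun x hx => ?_⟩
  by_cases hxK : x ∈ K
  · exact (hD ⟨x, ⟨hxK, hx⟩, rfl⟩).trans (le_max_right _ _)
  · exact (hKC hxK).trans (le_max_left _ _)

theorem exists_rpow_norm_sub_one_le_mul_youngFun {p : ℝ} (hp : 1 < p) {ε : ℝ} (hε : 0 < ε) :
    ∃ α > (1 : ℝ), ∀ u : ℂ, ε ≤ ‖u - 1‖ → ‖u - 1‖ ^ p ≤ α * youngFun p u := by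
  set s : Set ℂ := {u | ε ≤ ‖u - 1‖}
  have hpos : ∀ u ∈ s, 0 < youngFun p u := fun u hu =>
    youngFun_pos hp fun h => by simp [s, h] at hu; linarith
  have hs : IsClosed s := isClosed_le continuous_const (by fun_prop)
  have hcont : ContinuousOn (fun u => ‖u - 1‖ ^ p / youngFun p u) s :=
    (Continuous.continuousOn (by fun_prop (disch := linarith))).div
      (continuous_youngFun (by linarith)).continuousOn fun u hu => (hpos u hu).ne'
  have hfar : ∀ᶠ u in cocompact ℂ, ‖u - 1‖ ^ p / youngFun p u ≤ 2 := by
    rw [← Metric.cobounded_eq_cocompact]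
    exact (tendsto_rpow_norm_sub_one_div_youngFun hp).eventually (eventually_le_nhds one_lt_two)
  obtain ⟨C, hC⟩ := hcont.bddAbove_image_of_eventually_le_cocompact hs hfar
  refine ⟨max C 2, one_lt_two.trans_le (le_max_right _ _), fun u hu => ?_⟩
  calc ‖u - 1‖ ^ p = ‖u - 1‖ ^ p / youngFun p u * youngFun p u :=
        (div_mul_cancel₀ _ (hpos u hu).ne').symm
    _ ≤ max C 2 * youngFun p u :=
        mul_le_mul_of_nonneg_right ((hC ⟨u, hu, rfl⟩).trans (le_max_left _ _)) (hpos u hu).le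

theorem young_function_asymptotics (p : ℝ) (hp : 1 < p) :
    Tendsto (fun u : ℂ => ‖u - 1‖ ^ p /
        (‖u‖ ^ p - 1 + p * (1 - u.re)))
      (comap (fun u : ℂ => ‖u‖) atTop) (nhds 1) ∧
    ∀ ε > (0 : ℝ), ∃ α > (1 : ℝ), ∀ u : ℂ, ε ≤ ‖u - 1‖ →
      ‖u - 1‖ ^ p ≤ α * (‖u‖ ^ p - 1 + p * (1 - u.re)) := by
  refine ⟨?_, fun ε hε => exists_rpow_norm_sub_one_le_mul_youngFun hp hε⟩
  rw [comap_norm_atTop]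
  exact tendsto_rpow_norm_sub_one_div_youngFun hp
end

section
/- Let 1 < p < ∞ and ε > 0. Then there exists δ > 0, depending only on p and ε, such that for every probability space (Ω, ν) and every measurable complex-valued function z on Ω with ‖z‖_{L^p(ν)} ≤ 1 and Re ∫ z dν > 1 − δ, one has ‖z − 1‖_{L^p(ν)} < ε. -/
open MeasureTheory Filter Set

/-!
The tangent of the convex function `w ↦ ‖w‖ ^ p` at `w = 1` is `1 + p (re w - 1)`. The gap
`tangentGap p w` between them vanishes only at `w = 1` (strict convexity along rays and the
identity `‖w - 1‖² = (‖w‖ - 1)² + 2 (‖w‖ - re w)`) and grows like `‖w‖ ^ p`, so for every `t > 0`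
there is `K` with `‖w - 1‖ ^ p ≤ t ^ p + K tangentGap p w`. Integrating against `ν` gives
`‖z - 1‖ₚᵖ ≤ t ^ p + K ∫ tangentGap p ∘ z`, and
`∫ tangentGap p ∘ z = ‖z‖ₚᵖ - p re ∫ z + (p - 1) ≤ p (1 - re ∫ z) < p δ`.
-/

section TangentGap

variable {p : ℝ}

noncomputable def tangentGap (p : ℝ) (w : ℂ) : ℝ := ‖w‖ ^ p - p * w.re + (p - 1)

lemma mul_le_rpow_add_sub_one (hp : 1 ≤ p) {r : ℝ} (hr : 0 ≤ r) : p * r ≤ r ^ p + (p - 1) := by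
  have h := one_add_mul_self_le_rpow_one_add (s := r - 1) (by linarith) hp
  rw [add_sub_cancel] at h
  linarith

lemma tangentGap_nonneg (hp : 1 ≤ p) (w : ℂ) : 0 ≤ tangentGap p w := by
  have hre : p * w.re ≤ p * ‖w‖ := mul_le_mul_of_nonneg_left (Complex.re_le_norm w) (by linarith)
  have := mul_le_rpow_add_sub_one hp (norm_nonneg w)
  unfold tangentGap
  linarith

lemma convexOn_rpow_sub_mul_add (hp : 1 ≤ p) :
    ConvexOn ℝ (Ici 0) fun r : ℝ => r ^ p - p * r + (p - 1) :=
  ((convexOn_rpow hp).sub ((concaveOn_id (convex_Ici 0)).smul (by linarith))).add_const (p - 1)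

lemma exists_pos_le_rpow_sub_mul_add_of_le_abs_sub_one (hp : 1 < p) {s : ℝ} (hs : 0 < s) :
    ∃ m > 0, ∀ r, 0 ≤ r → s ≤ |r - 1| → m ≤ r ^ p - p * r + (p - 1) := by
  wlog hs1 : s ≤ 1 generalizing s
  · obtain ⟨m, hm, h⟩ := this one_pos le_rfl
    exact ⟨m, hm, fun r hr hrs => h r hr (by linarith)⟩
  set φ : ℝ → ℝ := fun r => r ^ p - p * r + (p - 1)
  have hφ := convexOn_rpow_sub_mul_add hp.le
  have hφ1 : φ 1 = 0 := by simp [φ]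
  have hright : 0 < φ (1 + s) := by
    have := one_add_mul_self_lt_rpow_one_add (by linarith) hs.ne' hp
    simp only [φ]
    linarith
  have hleft : 0 < φ (1 - s) := by
    have := one_add_mul_self_lt_rpow_one_add (by linarith) (neg_ne_zero.2 hs.ne') hp
    simp only [φ, ← sub_eq_add_neg] at this ⊢
    linarith
  refine ⟨min (φ (1 + s)) (φ (1 - s)), lt_min hright hleft, fun r hr hrs => ?_⟩
  rcases le_abs'.1 hrs with hlow | hhigh
  · have := hφ.le_left_of_right_le'' (x := r) (y := 1 - s) (z := 1) hr (mem_Ici.2 zero_le_one)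
      (by linarith) (by linarith) (by linarith)
    exact (min_le_right _ _).trans this
  · have := hφ.le_right_of_left_le'' (x := 1) (y := 1 + s) (z := r) (mem_Ici.2 zero_le_one) hr
      (by linarith) (by linarith) (by linarith)
    exact (min_le_left _ _).trans this

lemma norm_sub_one_sq (w : ℂ) : ‖w - 1‖ ^ 2 = (‖w‖ - 1) ^ 2 + 2 * (‖w‖ - w.re) := by
  have h1 : ‖w - 1‖ ^ 2 = (w.re - 1) ^ 2 + w.im ^ 2 := by
    rw [Complex.sq_norm, Complex.normSq_apply]
    simp only [Complex.sub_re, Complex.one_re, Complex.sub_im, Complex.one_im, sub_zero]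
    ring
  have h2 : ‖w‖ ^ 2 = w.re ^ 2 + w.im ^ 2 := by
    rw [Complex.sq_norm, Complex.normSq_apply]
    ring
  linear_combination h1 - h2

lemma exists_pos_le_tangentGap (hp : 1 < p) {t : ℝ} (ht : 0 < t) :
    ∃ m > 0, ∀ w : ℂ, t ≤ ‖w - 1‖ → m ≤ tangentGap p w := by
  have hp0 : 0 < p := by linarith
  obtain ⟨m, hm, hφ⟩ := exists_pos_le_rpow_sub_mul_add_of_le_abs_sub_one hp (half_pos ht)
  refine ⟨min (p * (t ^ 2 / 4)) m, by positivity, fun w hw => ?_⟩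
  have hsq := norm_sub_one_sq w
  have ht2 : t ^ 2 ≤ ‖w - 1‖ ^ 2 := pow_le_pow_left₀ ht.le hw 2
  have hangle : 0 ≤ p * (‖w‖ - w.re) := mul_nonneg hp0.le (by linarith [Complex.re_le_norm w])
  have hradial := mul_le_rpow_add_sub_one hp.le (norm_nonneg w)
  have hsplit : tangentGap p w = (‖w‖ ^ p - p * ‖w‖ + (p - 1)) + p * (‖w‖ - w.re) := by
    unfold tangentGap; ring
  rw [hsplit]
  rcases le_or_gt (t ^ 2 / 4) (‖w‖ - w.re) with hfar | hnear
  · have := mul_le_mul_of_nonneg_left hfar hp0.le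
    linarith [min_le_left (p * (t ^ 2 / 4)) m]
  · have habs : t / 2 ≤ |‖w‖ - 1| := by
      rw [← abs_of_pos (half_pos ht)]
      exact sq_le_sq.1 (by linarith [show (t / 2) ^ 2 = t ^ 2 / 4 by ring, sq_nonneg t])
    linarith [hφ _ (norm_nonneg w) habs, min_le_right (p * (t ^ 2 / 4)) m]

lemma exists_rpow_norm_sub_one_le_two_rpow_mul_tangentGap_add (hp : 1 < p) :
    ∃ B, ∀ w : ℂ, ‖w - 1‖ ^ p ≤ 2 ^ (p + 1) * tangentGap p w + B := by
  have hp0 : 0 < p := by linarith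
  obtain ⟨R, hR⟩ := eventually_atTop.1
    ((tendsto_rpow_atTop (sub_pos.2 hp)).eventually_ge_atTop (2 * p))
  refine ⟨(max R 1 + 1) ^ p, fun w => ?_⟩
  have hgap := tangentGap_nonneg hp.le w
  have hnorm : ‖w - 1‖ ≤ ‖w‖ + 1 := by simpa using norm_sub_le w 1
  rcases le_or_gt ‖w‖ (max R 1) with hsmall | hlarge
  · calc ‖w - 1‖ ^ p ≤ (max R 1 + 1) ^ p :=
          Real.rpow_le_rpow (norm_nonneg _) (by linarith) hp0.le
      _ ≤ 2 ^ (p + 1) * tangentGap p w + (max R 1 + 1) ^ p :=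
          le_add_of_nonneg_left (by positivity)
  · have hr1 : 1 < ‖w‖ := (le_max_right R 1).trans_lt hlarge
    have hpow : 2 * p * ‖w‖ ≤ ‖w‖ ^ p := by
      have := hR ‖w‖ ((le_max_left R 1).trans hlarge.le)
      rwa [Real.rpow_sub_one (by positivity), le_div_iff₀ (by positivity)] at this
    have hre : p * w.re ≤ p * ‖w‖ :=
      mul_le_mul_of_nonneg_left (Complex.re_le_norm w) hp0.le
    have hgrowth : ‖w‖ ^ p ≤ 2 * tangentGap p w := by
      unfold tangentGap
      linarith
    calc ‖w - 1‖ ^ p ≤ (2 * ‖w‖) ^ p := Real.rpow_le_rpow (norm_nonneg _) (by linarith) hp0.le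
      _ = 2 ^ p * ‖w‖ ^ p := Real.mul_rpow zero_le_two (norm_nonneg w)
      _ ≤ 2 ^ p * (2 * tangentGap p w) := by gcongr
      _ = 2 ^ (p + 1) * tangentGap p w := by rw [Real.rpow_add_one two_ne_zero]; ring
      _ ≤ 2 ^ (p + 1) * tangentGap p w + (max R 1 + 1) ^ p :=
          le_add_of_nonneg_right (by positivity)

lemma exists_rpow_norm_sub_one_le_add_mul_tangentGap (hp : 1 < p) {t : ℝ} (ht : 0 < t) :
    ∃ K > 0, ∀ w : ℂ, ‖w - 1‖ ^ p ≤ t ^ p + K * tangentGap p w := by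
  obtain ⟨m, hm, hfar⟩ := exists_pos_le_tangentGap hp ht
  obtain ⟨B, hB⟩ := exists_rpow_norm_sub_one_le_two_rpow_mul_tangentGap_add hp
  refine ⟨2 ^ (p + 1) + max B 0 / m, by positivity, fun w => ?_⟩
  have hgap := tangentGap_nonneg hp.le w
  rcases lt_or_ge ‖w - 1‖ t with hnear | hfar'
  · have := Real.rpow_le_rpow (norm_nonneg _) hnear.le (by linarith : 0 ≤ p)
    linarith [mul_nonneg (by positivity : 0 ≤ 2 ^ (p + 1) + max B 0 / m) hgap]
  · have hB' : max B 0 ≤ max B 0 / m * tangentGap p w := by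
      calc max B 0 = max B 0 / m * m := (div_mul_cancel₀ _ hm.ne').symm
        _ ≤ max B 0 / m * tangentGap p w := by gcongr; exact hfar w hfar'
    linarith [hB w, le_max_left B 0, Real.rpow_nonneg ht.le p]

end TangentGap

namespace MeasureTheory

section Lp

variable {Ω E : Type*} {m : MeasurableSpace Ω} {μ : Measure Ω} [NormedAddCommGroup E] {p : ℝ}

lemma MemLp.integrable_rpow_norm [IsFiniteMeasure μ] (hp : 0 ≤ p) {f : Ω → E}
    (hf : MemLp f (.ofReal p) μ) : Integrable (fun ω => ‖f ω‖ ^ p) μ := by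
  simpa [ENNReal.toReal_ofReal hp] using hf.integrable_norm_rpow'

lemma MemLp.eLpNorm_ofReal_le_one_iff (hp : 0 < p) {f : Ω → E} (hf : MemLp f (.ofReal p) μ) :
    eLpNorm f (.ofReal p) μ ≤ 1 ↔ ∫ ω, ‖f ω‖ ^ p ∂μ ≤ 1 := by
  rw [hf.eLpNorm_eq_integral_rpow_norm (by simpa using hp) ENNReal.ofReal_ne_top,
    ENNReal.toReal_ofReal hp.le, ENNReal.ofReal_le_one,
    Real.rpow_inv_le_iff_of_pos (by positivity) zero_le_one hp, Real.one_rpow]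

lemma MemLp.eLpNorm_ofReal_lt_ofReal_iff (hp : 0 < p) {ε : ℝ} (hε : 0 < ε) {f : Ω → E}
    (hf : MemLp f (.ofReal p) μ) :
    eLpNorm f (.ofReal p) μ < .ofReal ε ↔ ∫ ω, ‖f ω‖ ^ p ∂μ < ε ^ p := by
  rw [hf.eLpNorm_eq_integral_rpow_norm (by simpa using hp) ENNReal.ofReal_ne_top,
    ENNReal.toReal_ofReal hp.le, ENNReal.ofReal_lt_ofReal_iff hε,
    Real.rpow_inv_lt_iff_of_pos (by positivity) hε.le hp]

end Lp

section IntegralTangentGap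

variable {Ω : Type*} {m : MeasurableSpace Ω} {μ : Measure Ω} [IsProbabilityMeasure μ] {p : ℝ}
  {z : Ω → ℂ}

lemma MemLp.integrable_tangentGap (hp : 1 ≤ p) (hz : MemLp z (.ofReal p) μ) :
    Integrable (fun ω => tangentGap p (z ω)) μ := by
  have hnorm := hz.integrable_rpow_norm (by linarith)
  have hint : Integrable z μ := hz.integrable (by simpa using ENNReal.ofReal_le_ofReal hp)
  exact (hnorm.sub (hint.re.const_mul p)).add (integrable_const _)

lemma integral_tangentGap_le (hp : 1 ≤ p) (hz : MemLp z (.ofReal p) μ)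
    (hz1 : eLpNorm z (.ofReal p) μ ≤ 1) :
    ∫ ω, tangentGap p (z ω) ∂μ ≤ p * (1 - (∫ ω, z ω ∂μ).re) := by
  have hnorm := hz.integrable_rpow_norm (by linarith)
  have hint : Integrable z μ := hz.integrable (by simpa using ENNReal.ofReal_le_ofReal hp)
  have hre : Integrable (fun ω => p * (z ω).re) μ := hint.re.const_mul p
  have hA := (hz.eLpNorm_ofReal_le_one_iff (by linarith)).1 hz1
  have hB : ∫ ω, (z ω).re ∂μ = (∫ ω, z ω ∂μ).re := integral_re hint
  unfold tangentGap
  have hdiff : Integrable (fun ω => ‖z ω‖ ^ p - p * (z ω).re) μ := hnorm.sub hre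
  rw [integral_add hdiff (integrable_const _), integral_sub hnorm hre,
    integral_const_mul, integral_const, hB, probReal_univ, one_smul]
  linarith

end IntegralTangentGap

end MeasureTheory

theorem thin_slice_probability (p : ℝ) (hp : 1 < p) (ε : ℝ) (hε : 0 < ε) :
    ∃ δ > (0 : ℝ), ∀ (Ω : Type) (_ : MeasurableSpace Ω) (ν : Measure Ω),
      IsProbabilityMeasure ν → ∀ z : Ω → ℂ, MemLp z (ENNReal.ofReal p) ν →
      eLpNorm z (ENNReal.ofReal p) ν ≤ 1 →
      1 - δ < (∫ ω, z ω ∂ν).re →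
      eLpNorm (fun ω => z ω - 1) (ENNReal.ofReal p) ν < ENNReal.ofReal ε := by
  have hp0 : 0 < p := by linarith
  obtain ⟨K, hK, hpointwise⟩ := exists_rpow_norm_sub_one_le_add_mul_tangentGap hp (half_pos hε)
  have hhalf : (ε / 2) ^ p < ε ^ p := Real.rpow_lt_rpow (by positivity) (half_lt_self hε) hp0
  refine ⟨(ε ^ p - (ε / 2) ^ p) / (K * p), div_pos (sub_pos.2 hhalf) (by positivity), ?_⟩
  intro Ω _ ν _ z hz hz1 hre
  have hgap := integral_tangentGap_le hp.le hz hz1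
  have hzint := hz.integrable_tangentGap hp.le
  have hz_sub : MemLp (fun ω => z ω - 1) (.ofReal p) ν := hz.sub (memLp_const 1)
  rw [hz_sub.eLpNorm_ofReal_lt_ofReal_iff hp0 hε]
  calc ∫ ω, ‖z ω - 1‖ ^ p ∂ν ≤ ∫ ω, (ε / 2) ^ p + K * tangentGap p (z ω) ∂ν :=
        integral_mono (hz_sub.integrable_rpow_norm hp0.le)
          ((integrable_const _).add (hzint.const_mul K)) fun ω => hpointwise (z ω)
    _ = (ε / 2) ^ p + K * ∫ ω, tangentGap p (z ω) ∂ν := by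
        rw [integral_add (integrable_const _) (hzint.const_mul K), integral_const_mul,
          integral_const, probReal_univ, one_smul]
    _ < (ε / 2) ^ p + K * (p * ((ε ^ p - (ε / 2) ^ p) / (K * p))) := by
        gcongr
        exact hgap.trans_lt (by gcongr; linarith)
    _ = ε ^ p := by field_simp; ring
end
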